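/- Let f : [0,∞) → [0,∞) be continuous with f(x) → ∞, and suppose (|Z_t|) and (|X_t|) are coupled so that conditionally on X, |Z_t| is Poisson with mean |X_t| at any a.s.-finite stopping time, and a.s. limsup_t |Z_t|/f(t) ≤ 1. If with positive probability |X_t| > (1+ε) f(t) for arbitrarily large times (for some ε > 0), then with positive probability |Z_t| > (1+ε/2) f(t) for arbitrarily large times — a contradiction; hence almost surely limsup_t |X_t|/f(t) ≤ 1. -/

import Mathlib

/-!
Fix `0 < a < b` and `n ≤ M`, and let `τ` be the first time in `[n, M]` at which `X ≥ b f`,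
a stopping time because `X` and `f` are continuous. Conditionally on `ℱ_τ`, `Z τ` is Poisson
with mean `X τ ≥ b f(τ)`, so by the Chernoff bound the event "`X` crosses `b f` in `[n, M]`, but
`Z ≤ a f` at the crossing" has probability at most `exp (-ρ inf_{t ≥ n} f)` for a rate `ρ > 0`.
These events increase with `M`, and their probability tends to `0` as `n → ∞`; since a.s. `Z`
eventually stays below `a f`, a.s. `X` eventually stays below `b f`. The theorem follows with
`a = 1 + ε/2`, `b = 1 + ε` along `ε = 1/(k+1)`.

`Z τ` need not be measurable, and neither need these events: the argument uses outer measure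
only, together with the null-measurability of `{Z τ ≤ k}` that the coupling forces (a
non-integrable function has conditional expectation `0`).
-/

open MeasureTheory ProbabilityTheory Filter Set Real Function
open scoped NNReal ENNReal Nat Topology

namespace ProbabilityTheory

/-- Exponential rate of `P(Pois(r) ≤ a F)` when `r ≥ b F`; in terms of the constant
`C_k = (e/k)^k/e` of the Chernoff bound `P(Pois(λ) ≤ kλ) ≤ C_k^λ`, it is `-b log C_{a/b}`. -/
noncomputable def poissonTailRate (a b : ℝ) : ℝ := b - a - a * log (b / a)

lemma poissonTailRate_pos {a b : ℝ} (ha : 0 < a) (hab : a < b) : 0 < poissonTailRate a b := by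
  have hlog : log (b / a) < b / a - 1 :=
    log_lt_sub_one_of_pos (div_pos (ha.trans hab) ha) ((one_lt_div ha).2 hab).ne'
  have : a * (b / a - 1) = b - a := by field_simp
  unfold poissonTailRate
  nlinarith

lemma sum_range_poissonPMFReal_le (r : ℝ≥0) (m : ℕ) {s : ℝ} (hs0 : 0 < s) (hs1 : s ≤ 1) :
    ∑ k ∈ Finset.range (m + 1), poissonPMFReal r k ≤ exp ((s - 1) * r) * s⁻¹ ^ m := by
  have hterm : ∀ k ∈ Finset.range (m + 1),
      poissonPMFReal r k ≤ exp (-r) * ((s * r) ^ k / k !) * s⁻¹ ^ m := by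
    intro k hk
    calc poissonPMFReal r k = exp (-r) * ((s * r) ^ k / k !) * s⁻¹ ^ k := by
          rw [poissonPMFReal, mul_pow, inv_pow]; field_simp
      _ ≤ exp (-r) * ((s * r) ^ k / k !) * s⁻¹ ^ m := by
          gcongr
          · exact (one_le_inv₀ hs0).2 hs1
          · exact Nat.lt_succ_iff.mp (Finset.mem_range.mp hk)
  calc ∑ k ∈ Finset.range (m + 1), poissonPMFReal r k
      ≤ ∑ k ∈ Finset.range (m + 1), exp (-r) * ((s * r) ^ k / k !) * s⁻¹ ^ m :=
        Finset.sum_le_sum hterm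
    _ = exp (-r) * (∑ k ∈ Finset.range (m + 1), (s * r) ^ k / k !) * s⁻¹ ^ m := by
        rw [Finset.mul_sum, Finset.sum_mul]
    _ ≤ exp (-r) * exp (s * r) * s⁻¹ ^ m := by
        gcongr
        exact sum_le_exp_of_nonneg (by positivity) _
    _ = exp ((s - 1) * r) * s⁻¹ ^ m := by rw [← exp_add]; ring_nf

lemma sum_range_poissonPMFReal_le_exp_neg {a b F : ℝ} (ha : 0 < a) (hab : a < b) {r : ℝ≥0}
    (hr : b * F ≤ r) {m : ℕ} (hm : (m : ℝ) ≤ a * F) :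
    ∑ k ∈ Finset.range (m + 1), poissonPMFReal r k ≤ exp (-(poissonTailRate a b * F)) := by
  have hb : 0 < b := ha.trans hab
  have hs1 : a / b ≤ 1 := (div_le_one hb).2 hab.le
  refine (sum_range_poissonPMFReal_le r m (div_pos ha hb) hs1).trans ?_
  rw [inv_div, ← exp_log (pow_pos (div_pos hb ha) m), ← exp_add, exp_le_exp, log_pow]
  have hr' : (a / b - 1) * r ≤ (a / b - 1) * (b * F) :=
    mul_le_mul_of_nonpos_left hr (by linarith)
  have hm' : m * log (b / a) ≤ a * F * log (b / a) :=
    mul_le_mul_of_nonneg_right hm (log_nonneg ((one_le_div ha).2 hab.le))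
  have : (a / b - 1) * (b * F) = (a - b) * F := by field_simp
  unfold poissonTailRate
  nlinarith

lemma sum_range_poissonPMFReal_pos (r : ℝ≥0) (m : ℕ) :
    0 < ∑ k ∈ Finset.range (m + 1), poissonPMFReal r k :=
  Finset.sum_pos' (fun _ _ => by rw [poissonPMFReal]; positivity)
    ⟨0, by simp, by simp [poissonPMFReal, exp_pos]⟩

end ProbabilityTheory

namespace MeasureTheory

variable {Ω : Type*} {m mΩ : MeasurableSpace Ω} {μ : Measure Ω}

lemma integrable_of_condExp_ae_eq_ne_zero [NeZero μ] {g F : Ω → ℝ}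
    (hgF : μ[g | m] =ᵐ[μ] F) (hF : ∀ ω, F ω ≠ 0) : Integrable g μ := by
  by_contra hg
  rw [condExp_of_not_integrable hg] at hgF
  obtain ⟨ω, hω⟩ := hgF.exists
  exact hF ω hω.symm

lemma measure_inter_le_of_condExp_indicator_le [IsFiniteMeasure μ]
    (hm : m ≤ mΩ) {S T : Set Ω} (hS : MeasurableSet[m] S)
    (hT : Integrable (T.indicator (1 : Ω → ℝ)) μ) {c : ℝ}
    (hc : ∀ᵐ ω ∂μ, ω ∈ S → μ[T.indicator 1 | m] ω ≤ c) :
    μ (S ∩ T) ≤ ENNReal.ofReal c * μ S := by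
  have hT₀ : NullMeasurableSet T μ :=
    (aemeasurable_indicator_const_iff (1 : ℝ)).1 hT.aemeasurable
  have hST : μ.real (S ∩ T) ≤ c * μ.real S :=
    calc μ.real (S ∩ T) = ∫ ω in S, T.indicator 1 ω ∂μ := by
          have hT₀' := hT₀.mono (Measure.restrict_le_self (s := S))
          rw [integral_indicator₀ hT₀', Pi.one_def, integral_const, smul_eq_mul, mul_one,
            measureReal_restrict_apply_univ, measureReal_restrict_apply₀ hT₀', inter_comm]
      _ = ∫ ω in S, μ[T.indicator 1 | m] ω ∂μ := (setIntegral_condExp hm hT hS).symm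
      _ ≤ ∫ _ in S, c ∂μ :=
          setIntegral_mono_ae_restrict integrable_condExp.integrableOn (integrable_const c)
            ((ae_restrict_iff' (hm _ hS)).2 hc)
      _ = c * μ.real S := by rw [setIntegral_const, smul_eq_mul, mul_comm]
  calc μ (S ∩ T) = ENNReal.ofReal (μ.real (S ∩ T)) := (ofReal_measureReal).symm
    _ ≤ ENNReal.ofReal (c * μ.real S) := ENNReal.ofReal_le_ofReal hST
    _ = ENNReal.ofReal c * μ S := by rw [ENNReal.ofReal_mul' measureReal_nonneg, ofReal_measureReal]

lemma measure_inter_le_le_of_condExp_indicator_le [IsProbabilityMeasure μ] (hm : m ≤ mΩ)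
    {B : Set Ω} (hB : MeasurableSet[m] B) {N W : Ω → ℕ} (hN : Measurable[m] N)
    (hW : ∀ k, Integrable ({ω | W ω ≤ k}.indicator (1 : Ω → ℝ)) μ) {c : ℝ}
    (hc : ∀ k, ∀ᵐ ω ∂μ, ω ∈ B → N ω = k → μ[{ω | W ω ≤ k}.indicator 1 | m] ω ≤ c) :
    μ (B ∩ {ω | W ω ≤ N ω}) ≤ ENNReal.ofReal c := by
  set S : ℕ → Set Ω := fun k => B ∩ N ⁻¹' {k}
  have hS : ∀ k, MeasurableSet[m] (S k) := fun k => hB.inter (hN (measurableSet_singleton k))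
  have hS_disj : Pairwise (Disjoint on S) := fun i j hij =>
    disjoint_left.2 fun ω hi hj => hij (hi.2.symm.trans hj.2)
  calc μ (B ∩ {ω | W ω ≤ N ω}) ≤ μ (⋃ k, S k ∩ {ω | W ω ≤ k}) :=
        measure_mono fun ω ⟨hωB, hωW⟩ => mem_iUnion.2 ⟨N ω, ⟨hωB, rfl⟩, hωW⟩
    _ ≤ ∑' k, μ (S k ∩ {ω | W ω ≤ k}) := measure_iUnion_le _
    _ ≤ ∑' k, ENNReal.ofReal c * μ (S k) := ENNReal.tsum_le_tsum fun k =>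
        measure_inter_le_of_condExp_indicator_le hm (hS k) (hW k)
          (by filter_upwards [hc k] with ω hω hωS using hω hωS.1 hωS.2)
    _ = ENNReal.ofReal c * μ (⋃ k, S k) := by
        rw [ENNReal.tsum_mul_left, measure_iUnion hS_disj fun k => hm _ (hS k)]
    _ ≤ ENNReal.ofReal c := mul_le_of_le_one_right' prob_le_one

section HittingTime

variable {ι β : Type*} [ConditionallyCompleteLinearOrder ι] [TopologicalSpace ι] [OrderTopology ι]
  [TopologicalSpace β] {u : ι → Ω → β} {s : Set β} {n M : ι} {ω : Ω}

lemma hittingBtwn_mem_of_continuous (hs : IsClosed s) (hu : Continuous fun t => u t ω)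
    (h : ∃ j ∈ Icc n M, u j ω ∈ s) : u (hittingBtwn u s n M ω) ω ∈ s := by
  rw [hittingBtwn, if_pos h]
  exact ((isClosed_Icc.inter (hs.preimage hu)).csInf_mem h bddBelow_Icc.inter_of_left).2

lemma hittingBtwn_le_iff_of_continuous (hs : IsClosed s) (hu : Continuous fun t => u t ω)
    {t : ι} (ht : t < M) : hittingBtwn u s n M ω ≤ t ↔ ∃ j ∈ Icc n t, u j ω ∈ s := by
  constructor
  · intro hle
    have h : ∃ j ∈ Icc n M, u j ω ∈ s := by
      by_contra h
      exact (hle.trans_lt ht).ne (hittingBtwn_eq_end_iff.2 fun h' => absurd h' h)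
    exact ⟨_, ⟨le_hittingBtwn_of_exists h, hle⟩, hittingBtwn_mem_of_continuous hs hu h⟩
  · rintro ⟨j, hj, hjs⟩
    exact (hittingBtwn_le_of_mem hj.1 (hj.2.trans ht.le) hjs).trans hj.2

end HittingTime

lemma measurableSet_exists_mem_Icc_le {Y : ℝ → Ω → ℝ} {a b : ℝ}
    (hY : ∀ t ∈ Icc a b, Measurable[m] (Y t)) (hYc : ∀ ω, Continuous fun t => Y t ω) (c : ℝ) :
    MeasurableSet[m] {ω | ∃ j ∈ Icc a b, c ≤ Y j ω} := by
  obtain ⟨D, hDsub, hDc, hDdense⟩ :=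
    (TopologicalSpace.IsSeparable.of_separableSpace (Icc a b)).exists_countable_dense_subset
  -- a continuous path reaches `c` on the compact `Icc a b` iff it gets arbitrarily close on `D`
  have hD : {ω | ∃ j ∈ Icc a b, c ≤ Y j ω} =
      ⋂ k : ℕ, ⋃ q ∈ D, {ω | c - 1 / (k + 1) < Y q ω} := by
    ext ω
    simp only [mem_ofPred_eq, mem_iInter, mem_iUnion, exists_prop]
    constructor
    · rintro ⟨j, hj, hcj⟩ k
      have hjk : c - 1 / (k + 1) < Y j ω := by
        have : (0 : ℝ) < 1 / (k + 1) := by positivity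
        linarith
      obtain ⟨q, hq, hqD⟩ :=
        mem_closure_iff.1 (hDdense hj) _ (isOpen_lt continuous_const (hYc ω)) hjk
      exact ⟨q, hqD, hq⟩
    · intro h
      by_contra! hlt
      obtain ⟨q₀, hq₀, -⟩ := h 0
      obtain ⟨j, hj, hmax⟩ :=
        isCompact_Icc.exists_isMaxOn ⟨q₀, hDsub hq₀⟩ (hYc ω).continuousOn
      obtain ⟨k, hk⟩ := exists_nat_one_div_lt (sub_pos.2 (hlt j hj))
      obtain ⟨q, hq, hqc⟩ := h k
      have : Y q ω ≤ Y j ω := hmax (hDsub hq)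
      linarith
  rw [hD]
  exact .iInter fun k => .biUnion hDc fun q hq =>
    measurableSet_lt measurable_const (hY q (hDsub hq))

lemma isStoppingTime_hittingBtwn_Ici {ℱ : Filtration ℝ mΩ} {Y : ℝ → Ω → ℝ} (hY : Adapted ℱ Y)
    (hYc : ∀ ω, Continuous fun t => Y t ω) (c n M : ℝ) :
    IsStoppingTime ℱ (fun ω => ((hittingBtwn Y (Ici c) n M ω : ℝ) : WithTop ℝ)) := by
  intro t
  rcases le_or_gt M t with hMt | htM
  · simp [(hittingBtwn_le _).trans hMt]
  · have : {ω | ((hittingBtwn Y (Ici c) n M ω : ℝ) : WithTop ℝ) ≤ t} =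
        {ω | ∃ j ∈ Icc n t, c ≤ Y j ω} := by
      ext ω
      simpa using hittingBtwn_le_iff_of_continuous isClosed_Ici (hYc ω) htM
    rw [this]
    exact measurableSet_exists_mem_Icc_le (fun j hj => (hY j).mono (ℱ.mono hj.2) le_rfl) hYc c

end MeasureTheory

section Poissonization

variable {Ω : Type*} {mΩ : MeasurableSpace Ω} {P : Measure Ω} {ℱ : Filtration ℝ mΩ}
  {X : ℝ → Ω → ℝ≥0} {Z : ℝ → Ω → ℕ} {f : ℝ → ℝ} {a b n M : ℝ}

def PoissonCoupled (P : Measure Ω) (ℱ : Filtration ℝ mΩ) (X : ℝ → Ω → ℝ≥0) (Z : ℝ → Ω → ℕ) :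
    Prop :=
  ∀ (τ : Ω → ℝ) (hτ : IsStoppingTime ℱ (fun ω => (τ ω : WithTop ℝ))), (∀ ω, 0 ≤ τ ω) →
    ∀ n : ℕ,
      P[(fun ω => if Z (τ ω) ω ≤ n then (1:ℝ) else 0) | hτ.measurableSpace]
        =ᵐ[P] fun ω => ∑ k ∈ Finset.range (n + 1), poissonPMFReal (X (τ ω) ω) k

lemma PoissonCoupled.condExp_indicator_ae_eq (hXZ : PoissonCoupled P ℱ X Z) {τ : Ω → ℝ}
    (hτ : IsStoppingTime ℱ (fun ω => (τ ω : WithTop ℝ))) (hτ₀ : ∀ ω, 0 ≤ τ ω) (k : ℕ) :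
    P[{ω | Z (τ ω) ω ≤ k}.indicator 1 | hτ.measurableSpace]
      =ᵐ[P] fun ω => ∑ j ∈ Finset.range (k + 1), poissonPMFReal (X (τ ω) ω) j := by
  have hind : ({ω | Z (τ ω) ω ≤ k}.indicator 1 : Ω → ℝ) =
      fun ω => if Z (τ ω) ω ≤ k then 1 else 0 := by
    ext ω
    simp [indicator_apply]
  rw [hind]
  exact hXZ τ hτ hτ₀ k

noncomputable def crossingTime (X : ℝ → Ω → ℝ≥0) (f : ℝ → ℝ) (b n M : ℝ) : Ω → ℝ :=
  hittingBtwn (fun t ω => (X t ω : ℝ) - b * f t) (Ici 0) n M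

def undercountAtCrossing (X : ℝ → Ω → ℝ≥0) (Z : ℝ → Ω → ℕ) (f : ℝ → ℝ) (a b n M : ℝ) :
    Set Ω :=
  {ω | let τ := crossingTime X f b n M ω; b * f τ ≤ X τ ω ∧ (Z τ ω : ℝ) ≤ a * f τ}

lemma undercountAtCrossing_mono_right (hnM : n ≤ M) {M' : ℝ} (hMM' : M ≤ M') :
    undercountAtCrossing X Z f a b n M ⊆ undercountAtCrossing X Z f a b n M' := by
  intro ω hω
  have hτ : crossingTime X f b n M ω = crossingTime X f b n M' ω :=
    hittingBtwn_eq_hittingBtwn_of_exists hMM' ⟨_, hittingBtwn_mem_Icc hnM ω, sub_nonneg.2 hω.1⟩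
  simpa only [undercountAtCrossing, mem_ofPred_eq, ← hτ] using hω

lemma mem_undercountAtCrossing {ω : Ω} (hX : Continuous fun t => (X t ω : ℝ))
    (hf : Continuous f) (hcross : ∃ t ∈ Icc n M, b * f t ≤ X t ω)
    (hZ : ∀ t, n ≤ t → (Z t ω : ℝ) ≤ a * f t) : ω ∈ undercountAtCrossing X Z f a b n M := by
  obtain ⟨t, ht, hbt⟩ := hcross
  have hex : ∃ j ∈ Icc n M, (X j ω : ℝ) - b * f j ∈ Ici 0 := ⟨t, ht, sub_nonneg.2 hbt⟩
  exact ⟨sub_nonneg.1 (hittingBtwn_mem_of_continuous (u := fun t ω => (X t ω : ℝ) - b * f t)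
    isClosed_Ici (hX.sub (continuous_const.mul hf)) hex), hZ _ (le_hittingBtwn_of_exists hex)⟩

lemma measure_undercountAtCrossing_le [IsProbabilityMeasure P] (hXZ : PoissonCoupled P ℱ X Z)
    (hXad : ∀ t, Measurable[ℱ t] (X t)) (hXc : ∀ ω, Continuous fun t => (X t ω : ℝ))
    (hf : Continuous f) (hf_nn : ∀ t, 0 ≤ f t) (ha : 0 < a) (hab : a < b) (hn : 0 ≤ n)
    (hnM : n ≤ M) {C : ℝ} (hC : ∀ t, n ≤ t → C ≤ f t) :
    P (undercountAtCrossing X Z f a b n M)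
      ≤ ENNReal.ofReal (exp (-(poissonTailRate a b * C))) := by
  set Y : ℝ → Ω → ℝ := fun t ω => (X t ω : ℝ) - b * f t
  have hYad : Adapted ℱ Y := fun t =>
    (measurable_coe_nnreal_real.comp (hXad t)).sub measurable_const
  have hYc : ∀ ω, Continuous fun t => Y t ω := fun ω => (hXc ω).sub (continuous_const.mul hf)
  set τ := crossingTime X f b n M
  have hτ : IsStoppingTime ℱ (fun ω => (τ ω : WithTop ℝ)) :=
    isStoppingTime_hittingBtwn_Ici hYad hYc 0 n M
  have hτn : ∀ ω, n ≤ τ ω := le_hittingBtwn hnM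
  have hYτ : Measurable[hτ.measurableSpace] fun ω => Y (τ ω) ω :=
    measurable_stoppedValue (hYad.stronglyAdapted.isStronglyProgressive_of_continuous hYc) hτ
  have hfτ : Measurable[hτ.measurableSpace] fun ω => a * f (τ ω) :=
    measurable_const.mul (hf.measurable.comp hτ.measurable.untopA)
  have hcond := hXZ.condExp_indicator_ae_eq hτ fun ω => hn.trans (hτn ω)
  calc P (undercountAtCrossing X Z f a b n M)
      ≤ P ({ω | 0 ≤ Y (τ ω) ω} ∩ {ω | Z (τ ω) ω ≤ ⌊a * f (τ ω)⌋₊}) :=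
        measure_mono fun ω ⟨hX, hZ⟩ => ⟨sub_nonneg.2 hX, Nat.le_floor hZ⟩
    _ ≤ ENNReal.ofReal (exp (-(poissonTailRate a b * C))) := by
      refine measure_inter_le_le_of_condExp_indicator_le hτ.measurableSpace_le
        (measurableSet_le measurable_const hYτ) (Nat.measurable_floor.comp hfτ)
        (fun k => integrable_of_condExp_ae_eq_ne_zero (hcond k)
          fun ω => (sum_range_poissonPMFReal_pos _ k).ne') fun k => ?_
      filter_upwards [hcond k] with ω hω hωY hωk
      rw [hω]
      have hfτ_nn := hf_nn (τ ω)
      calc ∑ j ∈ Finset.range (k + 1), poissonPMFReal (X (τ ω) ω) j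
          ≤ exp (-(poissonTailRate a b * f (τ ω))) :=
            sum_range_poissonPMFReal_le_exp_neg ha hab (sub_nonneg.1 hωY)
              (hωk ▸ Nat.floor_le (by positivity))
        _ ≤ exp (-(poissonTailRate a b * C)) := by
            have := (poissonTailRate_pos ha hab).le
            gcongr
            exact hC _ (hτn ω)

def undercountAfter (X : ℝ → Ω → ℝ≥0) (Z : ℝ → Ω → ℕ) (f : ℝ → ℝ) (a b n : ℝ) : Set Ω :=
  ⋃ M : ℕ, undercountAtCrossing X Z f a b n (n + M)

lemma measure_undercountAfter_le [IsProbabilityMeasure P] (hXZ : PoissonCoupled P ℱ X Z)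
    (hXad : ∀ t, Measurable[ℱ t] (X t)) (hXc : ∀ ω, Continuous fun t => (X t ω : ℝ))
    (hf : Continuous f) (hf_nn : ∀ t, 0 ≤ f t) (ha : 0 < a) (hab : a < b) (hn : 0 ≤ n)
    {C : ℝ} (hC : ∀ t, n ≤ t → C ≤ f t) :
    P (undercountAfter X Z f a b n) ≤ ENNReal.ofReal (exp (-(poissonTailRate a b * C))) := by
  have hn_le : ∀ M : ℕ, n ≤ n + M := fun M => le_add_of_nonneg_right M.cast_nonneg
  rw [undercountAfter, Monotone.measure_iUnion fun M M' h =>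
    undercountAtCrossing_mono_right (hn_le M) (by gcongr)]
  exact iSup_le fun M =>
    measure_undercountAtCrossing_le hXZ hXad hXc hf hf_nn ha hab hn (hn_le M) hC

lemma measure_iInter_undercountAfter_eq_zero [IsProbabilityMeasure P]
    (hXZ : PoissonCoupled P ℱ X Z) (hXad : ∀ t, Measurable[ℱ t] (X t))
    (hXc : ∀ ω, Continuous fun t => (X t ω : ℝ)) (hf : Continuous f) (hf_nn : ∀ t, 0 ≤ f t)
    (hf_top : Tendsto f atTop atTop) (ha : 0 < a) (hab : a < b) (N : ℕ) :
    P (⋂ n ≥ N, undercountAfter X Z f a b n) = 0 := by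
  have hbound : ∀ C, P (⋂ n ≥ N, undercountAfter X Z f a b n)
      ≤ ENNReal.ofReal (exp (-(poissonTailRate a b * C))) := by
    intro C
    obtain ⟨T, hT⟩ := eventually_atTop.1 (tendsto_atTop.1 hf_top C)
    set n := max N ⌈T⌉₊
    refine (measure_mono (biInter_subset_of_mem (le_max_left N ⌈T⌉₊))).trans
      (measure_undercountAfter_le hXZ hXad hXc hf hf_nn ha hab n.cast_nonneg fun t ht => hT t ?_)
    calc T ≤ ⌈T⌉₊ := Nat.le_ceil T
      _ ≤ n := by exact_mod_cast le_max_right N ⌈T⌉₊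
      _ ≤ t := ht
  have hlim :
      Tendsto (fun C => ENNReal.ofReal (exp (-(poissonTailRate a b * C)))) atTop (𝓝 0) := by
    simpa using ENNReal.tendsto_ofReal (tendsto_exp_atBot.comp (tendsto_neg_atTop_atBot.comp
      (tendsto_id.const_mul_atTop (poissonTailRate_pos ha hab))))
  exact nonpos_iff_eq_zero.1 (ge_of_tendsto' hlim hbound)

theorem PoissonCoupled.ae_eventually_le [IsProbabilityMeasure P] (hXZ : PoissonCoupled P ℱ X Z)
    (hXad : ∀ t, Measurable[ℱ t] (X t)) (hXc : ∀ ω, Continuous fun t => (X t ω : ℝ))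
    (hf : Continuous f) (hf_nn : ∀ t, 0 ≤ f t) (hf_top : Tendsto f atTop atTop)
    (ha : 0 < a) (hab : a < b) (hZ : ∀ᵐ ω ∂P, ∀ᶠ t in atTop, (Z t ω : ℝ) ≤ a * f t) :
    ∀ᵐ ω ∂P, ∀ᶠ t in atTop, (X t ω : ℝ) ≤ b * f t := by
  have hnull := measure_iUnion_null
    (measure_iInter_undercountAfter_eq_zero hXZ hXad hXc hf hf_nn hf_top ha hab)
  filter_upwards [hZ, measure_eq_zero_iff_ae_notMem.1 hnull] with ω hZω hω
  by_contra hfreq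
  obtain ⟨T, hT⟩ := eventually_atTop.1 hZω
  refine hω (mem_iUnion.2 ⟨⌈T⌉₊, mem_iInter₂.2 fun n hn => ?_⟩)
  obtain ⟨t, hnt, hXt⟩ := frequently_atTop.1 (not_eventually.1 hfreq) n
  have htM : t ≤ n + ⌈t⌉₊ := (Nat.le_ceil t).trans (le_add_of_nonneg_left n.cast_nonneg)
  refine mem_iUnion.2 ⟨⌈t⌉₊, mem_undercountAtCrossing (hXc ω) hf
    ⟨t, ⟨hnt, by exact_mod_cast htM⟩, (not_le.1 hXt).le⟩ fun s hs => hT s ?_⟩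
  calc T ≤ ⌈T⌉₊ := Nat.le_ceil T
    _ ≤ n := by exact_mod_cast hn
    _ ≤ s := hs

end Poissonization

theorem poissonization_total_mass_upper_general
    {Ω : Type*} {mΩ : MeasurableSpace Ω} (P : Measure Ω) [IsProbabilityMeasure P]
    (ℱ : Filtration ℝ mΩ)
    (X : ℝ → Ω → ℝ≥0) (Z : ℝ → Ω → ℕ)
    (hXadapted : ∀ t, Measurable[ℱ t] (X t))
    (hXcont : ∀ ω, Continuous fun t => (X t ω : ℝ))
    (f : ℝ → ℝ) (hf_cont : Continuous f) (hf_nn : ∀ t, 0 ≤ f t)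
    (hf_inf : Tendsto f atTop atTop)
    (hcoupling : ∀ (τ : Ω → ℝ) (hτ : IsStoppingTime ℱ (fun ω => (τ ω : WithTop ℝ))), (∀ ω, 0 ≤ τ ω) →
      ∀ n : ℕ,
        P[(fun ω => if Z (τ ω) ω ≤ n then (1:ℝ) else 0) | hτ.measurableSpace]
          =ᵐ[P] fun ω => ∑ k ∈ Finset.range (n + 1), poissonPMFReal (X (τ ω) ω) k)
    (hZ : ∀ᵐ ω ∂P, ∀ ε : ℝ, 0 < ε → ∀ᶠ t in atTop, (Z t ω : ℝ) ≤ (1 + ε) * f t) :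
    ∀ᵐ ω ∂P, ∀ ε : ℝ, 0 < ε → ∀ᶠ t in atTop, (X t ω : ℝ) ≤ (1 + ε) * f t := by
  have hX : ∀ k : ℕ, ∀ᵐ ω ∂P, ∀ᶠ t in atTop, (X t ω : ℝ) ≤ (1 + 1 / (k + 1)) * f t := by
    intro k
    have hk : (0 : ℝ) < 1 / (k + 1) := by positivity
    refine PoissonCoupled.ae_eventually_le (a := 1 + 1 / (k + 1) / 2) hcoupling hXadapted hXcont
      hf_cont hf_nn hf_inf (by positivity) (by linarith) ?_
    filter_upwards [hZ] with ω hω using hω _ (by positivity)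
  filter_upwards [ae_all_iff.2 hX] with ω hω ε hε
  obtain ⟨k, hk⟩ := exists_nat_one_div_lt hε
  filter_upwards [hω k] with t ht
  exact ht.trans (by gcongr; exact hf_nn t)

/-- Poissonization upper bound for the total mass of a superprocess: if the total mass
processes `|Z|` and `|X|` are coupled so that, at every (a.s. finite, nonnegative) stopping
time of the filtration of `X`, conditionally on the past of `X` the value `|Z|` is Poisson
with mean `|X|`, the total mass `|X|` has continuous paths, `f : [0,∞) → [0,∞)` is
continuous with `f(t) → ∞`, and almost surely `limsup_t |Z_t|/f(t) ≤ 1`, then almost surely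
`limsup_t |X_t|/f(t) ≤ 1`. -/
theorem poissonization_total_mass_upper
    {Ω : Type*} {mΩ : MeasurableSpace Ω} (P : Measure Ω) [IsProbabilityMeasure P]
    (ℱ : Filtration ℝ mΩ)
    (X : ℝ → Ω → ℝ≥0) (Z : ℝ → Ω → ℕ)
    (hXadapted : ∀ t, Measurable[ℱ t] (X t))
    (hXcont : ∀ ω, Continuous fun t => (X t ω : ℝ))
    (hZmeas : ∀ t : ℝ, Measurable (Z t))
    (f : ℝ → ℝ) (hf_cont : Continuous f) (hf_nn : ∀ t, 0 ≤ f t)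
    (hf_inf : Tendsto f atTop atTop)
    (hcoupling : ∀ (τ : Ω → ℝ) (hτ : IsStoppingTime ℱ (fun ω => (τ ω : WithTop ℝ))), (∀ ω, 0 ≤ τ ω) →
      ∀ n : ℕ,
        P[(fun ω => if Z (τ ω) ω ≤ n then (1:ℝ) else 0) | hτ.measurableSpace]
          =ᵐ[P] fun ω => ∑ k ∈ Finset.range (n + 1), poissonPMFReal (X (τ ω) ω) k)
    (hZ : ∀ᵐ ω ∂P, ∀ ε : ℝ, 0 < ε → ∀ᶠ t in atTop, (Z t ω : ℝ) ≤ (1 + ε) * f t) :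
    ∀ᵐ ω ∂P, ∀ ε : ℝ, 0 < ε → ∀ᶠ t in atTop, (X t ω : ℝ) ≤ (1 + ε) * f t :=
  poissonization_total_mass_upper_general P ℱ X Z hXadapted hXcont f hf_cont hf_nn hf_inf hcoupling
    hZ
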